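/- (Closed-form first-order generating function solves the homological equation.) Let μ > 0, R > 0, p > 0, 0 ≤ e < 1, g ∈ ℝ, s ∈ ℝ; set η = √(1−e²), a = p/η², n = √(μ/a³), G = √(μ·p), and let ℓ_e(f) = f − 2·arctan( e·sin f / (1 + η + e·cos f) ) − e·η·sin f / (1 + e·cos f). Define W(f) = −G·(R²/p²)·(1/2)·[ (1 − (3/2)s²)·( (f − ℓ_e(f)) + e·sin f ) + (3/4)s²·( e·sin(f + 2g) + sin(2f + 2g) + (e/3)·sin(3f + 2g) ) ]. Then for every f ∈ ℝ: n·W′(f) = ( H̃(f) − K ) · η³/(1 + e·cos f)², where H̃(f) = −(μ/(2a))·(R²·(1 + e·cos f)²/p²)·(1/η²)·[ (1 − (3/2)s²)·(1 + e·cos f) + (3/4)s²·( e·cos(f + 2g) + 2·cos(2f + 2g) + e·cos(3f + 2g) ) ] and K = −(μ/(2a))·(R²/p²)·η·(1 − (3/2)s²). -/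

import Mathlib

/-!
With `η = √(1 - e²)`, the map `f ↦ f - 2 arctan (e sin f / (1 + η + e cos f))` is the eccentric
anomaly `E` as a function of the true anomaly, with `dE/df = η / (1 + e cos f)`, and
`e η sin f / (1 + e cos f) = e sin E`. Differentiating Kepler's equation `ℓ = E - e sin E` therefore
gives `dℓ/df = η³ / (1 + e cos f)²`. The remaining terms of `W` are elementary, and the identity
reduces to `n G = μ η / a`, i.e. `√(μ / a³) √(μ a η²) = μ η / a`.
-/

open Real

section Anomalies

variable {e : ℝ}

theorem one_add_mul_cos_pos (he : |e| < 1) (f : ℝ) : 0 < 1 + e * cos f := by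
  have : |e * cos f| < 1 := by
    rw [abs_mul]; nlinarith [abs_nonneg e, abs_nonneg (cos f), abs_cos_le_one f]
  linarith [neg_abs_le (e * cos f)]

noncomputable def eccentricAnomalyOfTrue (e f : ℝ) : ℝ :=
  f - 2 * arctan (e * sin f / (1 + √(1 - e ^ 2) + e * cos f))

noncomputable def meanAnomalyOfTrue (e f : ℝ) : ℝ :=
  eccentricAnomalyOfTrue e f - e * √(1 - e ^ 2) * sin f / (1 + e * cos f)

theorem hasDerivAt_eccentricAnomalyOfTrue (he : |e| < 1) (f : ℝ) :
    HasDerivAt (eccentricAnomalyOfTrue e) (√(1 - e ^ 2) / (1 + e * cos f)) f := by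
  set η := √(1 - e ^ 2)
  have hη2 : η ^ 2 = 1 - e ^ 2 := sq_sqrt (by nlinarith [(sq_lt_one_iff_abs_lt_one e).2 he])
  have hq := one_add_mul_cos_pos he f
  have h1η : 0 < 1 + η := by positivity
  have hD : 0 < 1 + η + e * cos f := by linarith [sqrt_nonneg (1 - e ^ 2)]
  have hu : HasDerivAt (fun x => e * sin x / (1 + η + e * cos x))
      ((e * cos f * (1 + η + e * cos f) - e * sin f * (e * -sin f)) / (1 + η + e * cos f) ^ 2) f :=
    ((hasDerivAt_sin f).const_mul e).div (((hasDerivAt_cos f).const_mul e).const_add (1 + η)) hD.ne'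
  refine ((hasDerivAt_id' f).sub (hu.arctan.const_mul 2)).congr_deriv ?_
  have hsc := sin_sq_add_cos_sq f
  have h1u : 1 + (e * sin f / (1 + η + e * cos f)) ^ 2
      = 2 * (1 + η) * (1 + e * cos f) / (1 + η + e * cos f) ^ 2 := by
    field_simp
    linear_combination e ^ 2 * hsc + hη2
  rw [h1u]
  field_simp
  linear_combination -e ^ 2 * hsc - hη2

theorem hasDerivAt_meanAnomalyOfTrue (he : |e| < 1) (f : ℝ) :
    HasDerivAt (meanAnomalyOfTrue e) (√(1 - e ^ 2) ^ 3 / (1 + e * cos f) ^ 2) f := by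
  have hE := hasDerivAt_eccentricAnomalyOfTrue he f
  set η := √(1 - e ^ 2)
  have hη2 : η ^ 2 = 1 - e ^ 2 := sq_sqrt (by nlinarith [(sq_lt_one_iff_abs_lt_one e).2 he])
  have hq := one_add_mul_cos_pos he f
  have hr : HasDerivAt (fun x => e * η * sin x / (1 + e * cos x))
      ((e * η * cos f * (1 + e * cos f) - e * η * sin f * (e * -sin f)) / (1 + e * cos f) ^ 2) f :=
    ((hasDerivAt_sin f).const_mul (e * η)).div (((hasDerivAt_cos f).const_mul e).const_add 1) hq.ne'
  refine (hE.sub hr).congr_deriv ?_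
  field_simp
  linear_combination -η * e ^ 2 * sin_sq_add_cos_sq f - η * hη2

end Anomalies

theorem hasDerivAt_sin_mul_add (k c x : ℝ) :
    HasDerivAt (fun x => sin (k * x + c)) (k * cos (k * x + c)) x := by
  simpa [mul_comm] using (((hasDerivAt_id x).const_mul k).add_const c).sin

theorem sqrt_div_cube_mul_sqrt_mul {μ a η : ℝ} (hμ : 0 ≤ μ) (ha : 0 < a) (hη : 0 ≤ η) :
    √(μ / a ^ 3) * √(μ * (a * η ^ 2)) = μ * η / a := by
  rw [← sqrt_mul (by positivity), show μ / a ^ 3 * (μ * (a * η ^ 2)) = (μ * η / a) ^ 2 by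
    field_simp]
  exact sqrt_sq (by positivity)

theorem first_order_homological_equation_general
    (μ R p e η a n G : ℝ) (g s : ℝ)
    (hμ : 0 < μ) (hp : 0 < p)
    (he0 : 0 ≤ e) (he1 : e < 1)
    (hη : η = Real.sqrt (1 - e ^ 2))
    (ha : a = p / η ^ 2)
    (hn : n = Real.sqrt (μ / a ^ 3))
    (hG : G = Real.sqrt (μ * p))
    (ℓ : ℝ → ℝ)
    (hℓ : ∀ f : ℝ, ℓ f =
      f - 2 * Real.arctan (e * Real.sin f / (1 + η + e * Real.cos f))
        - e * η * Real.sin f / (1 + e * Real.cos f))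
    (W : ℝ → ℝ)
    (hW : ∀ f : ℝ, W f =
      -G * (R ^ 2 / p ^ 2) * (1 / 2) *
        ((1 - 3 / 2 * s ^ 2) * ((f - ℓ f) + e * Real.sin f) +
          3 / 4 * s ^ 2 *
            (e * Real.sin (f + 2 * g) + Real.sin (2 * f + 2 * g) +
              e / 3 * Real.sin (3 * f + 2 * g))))
    (Htilde : ℝ → ℝ)
    (hHt : ∀ f : ℝ, Htilde f =
      -(μ / (2 * a)) * (R ^ 2 * (1 + e * Real.cos f) ^ 2 / p ^ 2) * (1 / η ^ 2) *
        ((1 - 3 / 2 * s ^ 2) * (1 + e * Real.cos f) +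
          3 / 4 * s ^ 2 *
            (e * Real.cos (f + 2 * g) + 2 * Real.cos (2 * f + 2 * g) +
              e * Real.cos (3 * f + 2 * g))))
    (K : ℝ)
    (hK : K = -(μ / (2 * a)) * (R ^ 2 / p ^ 2) * η * (1 - 3 / 2 * s ^ 2)) :
    ∀ f : ℝ,
      HasDerivAt W ((Htilde f - K) * (η ^ 3 / (1 + e * Real.cos f) ^ 2) / n) f := by
  have he : |e| < 1 := abs_lt.2 ⟨by linarith, he1⟩
  have hη0 : 0 < η := hη ▸ sqrt_pos.2 (by nlinarith)
  have ha0 : 0 < a := ha ▸ by positivity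
  have hnG : n * G = μ * η / a := by
    rw [hn, hG, show p = a * η ^ 2 by rw [ha]; field_simp]
    exact sqrt_div_cube_mul_sqrt_mul hμ.le ha0 hη0.le
  have hn0 : n ≠ 0 := left_ne_zero_of_mul (b := G) (by rw [hnG]; positivity)
  have hℓ' : ℓ = meanAnomalyOfTrue e := funext fun f => by rw [hℓ, hη]; rfl
  intro f
  have hq := one_add_mul_cos_pos he f
  have hsecular : HasDerivAt (fun x => (x - ℓ x) + e * sin x)
      (1 - η ^ 3 / (1 + e * cos f) ^ 2 + e * cos f) f := by
    rw [hℓ', hη]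
    exact ((hasDerivAt_id' f).sub (hasDerivAt_meanAnomalyOfTrue he f)).add
      ((hasDerivAt_sin f).const_mul e)
  have hperiodic : HasDerivAt
      (fun x => e * sin (x + 2 * g) + sin (2 * x + 2 * g) + e / 3 * sin (3 * x + 2 * g))
      (e * cos (f + 2 * g) + 2 * cos (2 * f + 2 * g) + e * cos (3 * f + 2 * g)) f := by
    have h1 := ((hasDerivAt_id' f).add_const (2 * g)).sin.const_mul e
    exact ((h1.add (hasDerivAt_sin_mul_add 2 (2 * g) f)).add
      ((hasDerivAt_sin_mul_add 3 (2 * g) f).const_mul (e / 3))).congr_deriv (by ring)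
  rw [funext hW]
  refine (((hsecular.const_mul _).add (hperiodic.const_mul _)).const_mul _).congr_deriv ?_
  rw [hHt, hK, show G = μ * η / a / n by rw [← hnG]; field_simp]
  field_simp
  ring

/-- (Closed-form first-order generating function solves the
homological equation.) With `ℓ_e` the mean anomaly as a function of the true anomaly,
`n = √(μ/a³)`, `G = √(μ p)`, the generating function
`W(f) = −G (R²/p²) (1/2) [ (1−(3/2)s²)((f−ℓ_e f) + e sin f)
        + (3/4)s² ( e sin(f+2g) + sin(2f+2g) + (e/3) sin(3f+2g) ) ]`
satisfies `n W′(f) = (H̃(f) − K) · η³/(1+e cos f)²` for every `f`. -/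
theorem first_order_homological_equation
    (μ R p e η a n G : ℝ) (g s : ℝ)
    (hμ : 0 < μ) (hR : 0 < R) (hp : 0 < p)
    (he0 : 0 ≤ e) (he1 : e < 1)
    (hη : η = Real.sqrt (1 - e ^ 2))
    (ha : a = p / η ^ 2)
    (hn : n = Real.sqrt (μ / a ^ 3))
    (hG : G = Real.sqrt (μ * p))
    (ℓ : ℝ → ℝ)
    (hℓ : ∀ f : ℝ, ℓ f =
      f - 2 * Real.arctan (e * Real.sin f / (1 + η + e * Real.cos f))
        - e * η * Real.sin f / (1 + e * Real.cos f))
    (W : ℝ → ℝ)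
    (hW : ∀ f : ℝ, W f =
      -G * (R ^ 2 / p ^ 2) * (1 / 2) *
        ((1 - 3 / 2 * s ^ 2) * ((f - ℓ f) + e * Real.sin f) +
          3 / 4 * s ^ 2 *
            (e * Real.sin (f + 2 * g) + Real.sin (2 * f + 2 * g) +
              e / 3 * Real.sin (3 * f + 2 * g))))
    (Htilde : ℝ → ℝ)
    (hHt : ∀ f : ℝ, Htilde f =
      -(μ / (2 * a)) * (R ^ 2 * (1 + e * Real.cos f) ^ 2 / p ^ 2) * (1 / η ^ 2) *
        ((1 - 3 / 2 * s ^ 2) * (1 + e * Real.cos f) +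
          3 / 4 * s ^ 2 *
            (e * Real.cos (f + 2 * g) + 2 * Real.cos (2 * f + 2 * g) +
              e * Real.cos (3 * f + 2 * g))))
    (K : ℝ)
    (hK : K = -(μ / (2 * a)) * (R ^ 2 / p ^ 2) * η * (1 - 3 / 2 * s ^ 2)) :
    ∀ f : ℝ,
      HasDerivAt W ((Htilde f - K) * (η ^ 3 / (1 + e * Real.cos f) ^ 2) / n) f :=
  first_order_homological_equation_general μ R p e η a n G g s hμ hp he0 he1 hη ha hn hG ℓ hℓ W hW
    Htilde hHt K hK
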